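/- arXiv:1401.1474 — 7 statements merged into one kernel-verified Lean document; each statement's English description precedes it below -/
import Mathlib

section
/- A cubic polynomial x^3 + px^2 + qx + r with real coefficients and r ≠ 0 satisfies p·r^(1/3) + 3·r^(2/3) + q = 0 if and only if there exist real numbers h, s with s ≠ 0 such that r = s^3, q = -(h+3)s^2, and p = hs. -/
/-! With `s = cbrt r` the relation reads `p s + 3 s² + q = 0`; since `s ≠ 0` it is solved by
`h = p / s`, and `s` is recovered from `r = s³` because cubing is injective on `ℝ`. -/

noncomputable def cbrt (x : ℝ) : ℝ := if x < 0 then -((-x) ^ ((1:ℝ)/3)) else x ^ ((1:ℝ)/3)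

theorem pow_three_cbrt (x : ℝ) : cbrt x ^ 3 = x := by
  have rpow_cube {y : ℝ} (hy : 0 ≤ y) : (y ^ ((1:ℝ)/3)) ^ 3 = y := by
    rw [one_div]
    exact_mod_cast Real.rpow_inv_natCast_pow hy three_ne_zero
  unfold cbrt
  split_ifs with hx
  · rw [Odd.neg_pow (by decide), rpow_cube (by linarith), neg_neg]
  · exact rpow_cube (not_lt.mp hx)

theorem cbrt_pow_three (s : ℝ) : cbrt (s ^ 3) = s :=
  (Odd.pow_inj (by decide)).mp (pow_three_cbrt (s ^ 3))

theorem cbrt_ne_zero {x : ℝ} (hx : x ≠ 0) : cbrt x ≠ 0 := by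
  intro h
  apply hx
  rw [← pow_three_cbrt x, h, zero_pow three_ne_zero]

theorem add_three_mul_sq_add_eq_zero_iff {p q s : ℝ} (hs : s ≠ 0) :
    p * s + 3 * s ^ 2 + q = 0 ↔ ∃ h : ℝ, q = -(h + 3) * s ^ 2 ∧ p = h * s := by
  constructor
  · intro hrel
    refine ⟨p / s, ?_, by field_simp⟩
    field_simp
    linear_combination hrel
  · rintro ⟨h, rfl, rfl⟩
    ring

theorem rcp_characterization (p q r : ℝ) (hr : r ≠ 0) :
    p * cbrt r + 3 * (cbrt r) ^ 2 + q = 0 ↔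
      ∃ h s : ℝ, s ≠ 0 ∧ r = s ^ 3 ∧ q = -(h + 3) * s ^ 2 ∧ p = h * s := by
  rw [add_three_mul_sq_add_eq_zero_iff (cbrt_ne_zero hr)]
  constructor
  · rintro ⟨h, hq, hp⟩
    exact ⟨h, cbrt r, cbrt_ne_zero hr, (pow_three_cbrt r).symm, hq, hp⟩
  · rintro ⟨h, s, -, rfl, hq, hp⟩
    rw [cbrt_pow_three]
    exact ⟨h, hq, hp⟩
end

section
/- For real h, s with s ≠ 0 and any z ≠ s, the identity ρ(h,s,η_s(z)) = -s^3·ρ(h,s,z)/(s-z)^3 holds, where ρ(h,s,x) = x^3 + hsx^2 - (h+3)s^2x + s^3 and η_s(z) = s^2/(s-z). -/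
theorem rho_eta_identity_general (h s z : ℝ) (hz : z ≠ s) :
    (s ^ 2 / (s - z)) ^ 3 + h * s * (s ^ 2 / (s - z)) ^ 2
      - (h + 3) * s ^ 2 * (s ^ 2 / (s - z)) + s ^ 3 =
    -s ^ 3 * (z ^ 3 + h * s * z ^ 2 - (h + 3) * s ^ 2 * z + s ^ 3) / (s - z) ^ 3 := by
  have hsz : s - z ≠ 0 := sub_ne_zero.mpr hz.symm
  field_simp
  ring

theorem rho_eta_identity (h s z : ℝ) (hs : s ≠ 0) (hz : z ≠ s) :
    (s ^ 2 / (s - z)) ^ 3 + h * s * (s ^ 2 / (s - z)) ^ 2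
      - (h + 3) * s ^ 2 * (s ^ 2 / (s - z)) + s ^ 3 =
    -s ^ 3 * (z ^ 3 + h * s * z ^ 2 - (h + 3) * s ^ 2 * z + s ^ 3) / (s - z) ^ 3 :=
  rho_eta_identity_general h s z hz
end

section
/- If α is a zero of ρ(h,s,x) = x^3 + hsx^2 - (h+3)s^2x + s^3 (with s ≠ 0), then s^2/(s-α) and -s(s-α)/α are also zeros of ρ(h,s,x); i.e., the zero set of ρ(h,s,x) is {α, η_s(α), η_s^2(α)} where η_s(z) = s^2/(s-z). -/
/-! The roots of `ρ(h,s,·)` are permuted cyclically by `η_s(z) = s²/(s - z)`, whose square is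
`z ↦ -s(s - z)/z`. Concretely, once `α` is a root, `α(s - α) ρ(h,s,y)` factors as
`(y - α)((s - α)y - s²)(αy + s(s - α))`, and the last two factors vanish exactly at `η_s(α)` and
`η_s²(α)`. -/

section Field

variable {K : Type*} [Field K]

def rcp (h s x : K) : K := x ^ 3 + h * s * x ^ 2 - (h + 3) * s ^ 2 * x + s ^ 3

variable {h s α : K}

lemma ne_zero_of_rcp_eq_zero (hs : s ≠ 0) (hα : rcp h s α = 0) : α ≠ 0 := by
  rintro rfl
  exact pow_ne_zero 3 hs (by simpa [rcp] using hα)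

lemma sub_ne_zero_of_rcp_eq_zero (hs : s ≠ 0) (hα : rcp h s α = 0) : s - α ≠ 0 := by
  rw [sub_ne_zero]
  rintro rfl
  unfold rcp at hα
  exact pow_ne_zero 3 hs (by linear_combination -hα)

lemma mul_mul_rcp_eq_of_rcp_eq_zero (hα : rcp h s α = 0) (y : K) :
    α * (s - α) * rcp h s y = (y - α) * ((s - α) * y - s ^ 2) * (α * y + s * (s - α)) := by
  unfold rcp at *
  linear_combination (y * (s - y)) * hα

lemma rcp_eq_zero_iff_of_rcp_eq_zero (hs : s ≠ 0) (hα : rcp h s α = 0) {y : K} :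
    rcp h s y = 0 ↔ y = α ∨ y = s ^ 2 / (s - α) ∨ y = -(s * (s - α)) / α := by
  have hα₀ := ne_zero_of_rcp_eq_zero hs hα
  have hsα := sub_ne_zero_of_rcp_eq_zero hs hα
  rw [← mul_eq_zero_iff_left (mul_ne_zero hα₀ hsα), mul_mul_rcp_eq_of_rcp_eq_zero hα,
    mul_eq_zero, mul_eq_zero, sub_eq_zero, eq_div_iff hsα, eq_div_iff hα₀, or_assoc]
  refine or_congr_right (or_congr ?_ ?_) <;> constructor <;> intro hy <;> linear_combination hy

end Field

theorem rcp_zero_set (h s α : ℝ) (hs : s ≠ 0)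
    (hα : α ^ 3 + h * s * α ^ 2 - (h + 3) * s ^ 2 * α + s ^ 3 = 0) :
    {x : ℝ | x ^ 3 + h * s * x ^ 2 - (h + 3) * s ^ 2 * x + s ^ 3 = 0} =
      {α, s ^ 2 / (s - α), -(s * (s - α)) / α} := by
  ext x
  exact rcp_eq_zero_iff_of_rcp_eq_zero (h := h) hs hα
end

section
/- If α is a zero of the Shanks cubic polynomial x^3 - hx^2 - (h+3)x - 1, then -1/(α+1) and -(α+1)/α are also zeros of it. -/
/-! The Möbius map `σ x = -1/(x+1)` has order three, with inverse `x ↦ -(x+1)/x`, and the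
Shanks cubic `p` is semi-invariant under it: `p (σ x) = -p x / (x+1)^3` and
`p (σ⁻¹ x) = p x / x^3`. Hence `σ` and `σ⁻¹` map zeros of `p` to zeros, once one checks that
`0` and `-1` are not zeros. -/

section Shanks

variable {K : Type*} [Field K]

def shanksCubic (h x : K) : K := x ^ 3 - h * x ^ 2 - (h + 3) * x - 1

@[simp]
lemma shanksCubic_zero (h : K) : shanksCubic h 0 = -1 := by
  simp [shanksCubic]

@[simp]
lemma shanksCubic_neg_one (h : K) : shanksCubic h (-1) = 1 := by
  unfold shanksCubic; ring

lemma shanksCubic_neg_inv_add_one (h : K) {x : K} (hx : x + 1 ≠ 0) :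
    shanksCubic h (-(1 / (x + 1))) = -shanksCubic h x / (x + 1) ^ 3 := by
  unfold shanksCubic
  field_simp
  ring

lemma shanksCubic_neg_add_one_div (h : K) {x : K} (hx : x ≠ 0) :
    shanksCubic h (-((x + 1) / x)) = shanksCubic h x / x ^ 3 := by
  unfold shanksCubic
  field_simp
  ring

variable {h α : K}

lemma ne_zero_of_shanksCubic_eq_zero (hα : shanksCubic h α = 0) : α ≠ 0 := by
  rintro rfl
  simp at hα

lemma add_one_ne_zero_of_shanksCubic_eq_zero (hα : shanksCubic h α = 0) : α + 1 ≠ 0 := by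
  intro hα₁
  obtain rfl : α = -1 := eq_neg_of_add_eq_zero_left hα₁
  simp at hα

end Shanks

theorem shanks_zero_orbit (h α : ℝ)
    (hα : α ^ 3 - h * α ^ 2 - (h + 3) * α - 1 = 0) :
    (-(1 / (α + 1))) ^ 3 - h * (-(1 / (α + 1))) ^ 2 - (h + 3) * (-(1 / (α + 1))) - 1 = 0 ∧
    (-((α + 1) / α)) ^ 3 - h * (-((α + 1) / α)) ^ 2 - (h + 3) * (-((α + 1) / α)) - 1 = 0 := by
  change shanksCubic h α = 0 at hα
  change shanksCubic h _ = 0 ∧ shanksCubic h _ = 0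
  rw [shanksCubic_neg_inv_add_one h (add_one_ne_zero_of_shanksCubic_eq_zero hα),
    shanksCubic_neg_add_one_div h (ne_zero_of_shanksCubic_eq_zero hα), hα]
  simp
end

section
/- For every real h > -3/2 and each k ∈ {0, 2, 4}, the real number x_k = (1/3)·(h + 2·√(h²+3h+9)·cos((1/3)·(arctan(3√3/(3+2h)) + kπ))) satisfies x_k^3 - h·x_k^2 - (h+3)·x_k - 1 = 0. -/
/-! Over `x = (h + 2√τ c)/3` with `τ = h² + 3h + 9`, the Shanks cubic becomes
`(2τ√τ (4c³ - 3c) - (2h + 3) τ) / 27`, so `x` is a root as soon as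
`cos (3θ) = 4c³ - 3c = (2h + 3)/(2√τ)` for `c = cos θ`. For `h > -3/2` this value lies in `(0, 1]` and
is the cosine of `arctan (3√3/(3 + 2h))`, since `τ = ((2h + 3)² + 27)/4`; the three
admissible `θ` differ by multiples of `2π/3`. -/

open Real

lemma sq_add_three_mul_add_nine_pos (h : ℝ) : 0 < h ^ 2 + 3 * h + 9 := by
  nlinarith [sq_nonneg (h + 3 / 2)]

lemma shanks_cubic_eq_zero_of_chebyshev {h t c : ℝ} (ht : t ^ 2 = h ^ 2 + 3 * h + 9)
    (hc : 2 * t * (4 * c ^ 3 - 3 * c) = 3 + 2 * h) :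
    let x := (1 / 3) * (h + 2 * t * c)
    x ^ 3 - h * x ^ 2 - (h + 3) * x - 1 = 0 := by
  intro x
  linear_combination (t ^ 2 / 27) * hc + ((6 * t * c + 3 + 2 * h) / 27) * ht

lemma cos_add_nat_mul_pi_of_even (θ : ℝ) {k : ℕ} (hk : Even k) :
    cos (θ + k * π) = cos θ := by
  obtain ⟨m, rfl⟩ := hk
  rw [show θ + ((m + m : ℕ) : ℝ) * π = θ + m * (2 * π) by push_cast; ring]
  exact cos_add_nat_mul_two_pi θ m

lemma cos_arctan_three_sqrt_three_div {h : ℝ} (hh : 0 < 3 + 2 * h) :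
    cos (arctan (3 * √3 / (3 + 2 * h))) = (3 + 2 * h) / (2 * √(h ^ 2 + 3 * h + 9)) := by
  have hsq : 1 + (3 * √3 / (3 + 2 * h)) ^ 2 = (2 * √(h ^ 2 + 3 * h + 9) / (3 + 2 * h)) ^ 2 := by
    rw [div_pow, div_pow, mul_pow, mul_pow, sq_sqrt (by norm_num), sq_sqrt (sq_add_three_mul_add_nine_pos h).le]
    field_simp
    ring
  rw [cos_arctan, hsq, sqrt_sq (by positivity), one_div_div]

theorem shanks_zeros_trig_pos (h : ℝ) (hh : h > -3/2) (k : ℕ) (hk : k ∈ ({0, 2, 4} : Set ℕ)) :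
    let x := (1/3) * (h + 2 * Real.sqrt (h^2 + 3*h + 9) *
      Real.cos ((1/3) * (Real.arctan (3 * Real.sqrt 3 / (3 + 2*h)) + k * Real.pi)))
    x ^ 3 - h * x ^ 2 - (h + 3) * x - 1 = 0 := by
  have hk_even : Even k := by rcases hk with rfl | rfl | rfl <;> decide
  set φ := arctan (3 * √3 / (3 + 2 * h)) + k * π
  have hcos : 4 * cos ((1 / 3) * φ) ^ 3 - 3 * cos ((1 / 3) * φ) = cos φ := by
    rw [← cos_three_mul]
    ring_nf
  apply shanks_cubic_eq_zero_of_chebyshev (sq_sqrt (sq_add_three_mul_add_nine_pos h).le)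
  rw [hcos, cos_add_nat_mul_pi_of_even _ hk_even, cos_arctan_three_sqrt_three_div (by linarith)]
  exact mul_div_cancel₀ _ (mul_pos two_pos (sqrt_pos.2 (sq_add_three_mul_add_nine_pos h))).ne'
end

section
/- √7·cos((1/3)·arctan(9√3/10)) - √21·sin((1/3)·arctan(9√3/10)) = 1. -/
/-! With `θ = arctan (9√3/10)` and `φ = θ/3 + π/3`, the left-hand side equals `x = 2√7 cos φ`.
Since `cos (3φ) = -cos θ = -10/(7√7)`, the triple-angle formula makes `x` a zero of
`X³ - 21X + 20 = (X - 1)(X - 4)(X + 5)`, and `φ ∈ (π/3, π/2)` puts `x` in `[0, √7)`, where `1` is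
the only zero. -/

open Real

lemma eq_one_of_cubic_eq_zero {x : ℝ} (h : x ^ 3 - 21 * x + 20 = 0) (hlow : -5 < x)
    (hupp : x < 4) : x = 1 := by
  have hfac : (x - 1) * ((x - 4) * (x + 5)) = 0 := by linear_combination h
  rcases mul_eq_zero.mp hfac with h1 | h45
  · linarith
  · rcases mul_eq_zero.mp h45 with h4 | h5 <;> nlinarith

/-- Viète's trigonometric parametrisation of the depressed cubic `X³ - 3a²X`. -/
lemma two_mul_cos_pow_three_sub (a φ : ℝ) :
    (2 * a * cos φ) ^ 3 - 3 * a ^ 2 * (2 * a * cos φ) = 2 * a ^ 3 * cos (3 * φ) := by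
  rw [cos_three_mul]; ring

lemma mul_cos_sub_mul_sqrt_three_mul_sin (a t : ℝ) :
    a * cos t - a * √3 * sin t = 2 * a * cos (t + π / 3) := by
  rw [cos_add, cos_pi_div_three, sin_pi_div_three]; ring

lemma cos_arctan_nine_sqrt_three_div_ten : cos (arctan (9 * √3 / 10)) = 10 / (7 * √7) := by
  have h : 1 + (9 * √3 / 10) ^ 2 = (7 * √7 / 10) ^ 2 := by
    rw [div_pow, mul_pow, sq_sqrt (by norm_num), div_pow, mul_pow, sq_sqrt (by norm_num)]
    norm_num
  rw [cos_arctan, h, sqrt_sq (by positivity), one_div_div]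

lemma arctan_nine_sqrt_three_div_ten_pos : 0 < arctan (9 * √3 / 10) := by
  simpa only [arctan_zero] using arctan_strictMono (by positivity : (0 : ℝ) < 9 * √3 / 10)

theorem sqrt_two_trig_identity :
    Real.sqrt 7 * Real.cos ((1/3) * Real.arctan (9 * Real.sqrt 3 / 10)) -
      Real.sqrt 21 * Real.sin ((1/3) * Real.arctan (9 * Real.sqrt 3 / 10)) = 1 := by
  set θ := arctan (9 * √3 / 10)
  set φ := 1 / 3 * θ + π / 3
  have hsqrt7 : √7 ^ 2 = 7 := sq_sqrt (by norm_num)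
  have hsqrt21 : √21 = √7 * √3 := by rw [← sqrt_mul (by norm_num)]; norm_num
  rw [hsqrt21, mul_cos_sub_mul_sqrt_three_mul_sin]
  have hcos3φ : cos (3 * φ) = -(10 / (7 * √7)) := by
    rw [show 3 * φ = θ + π by ring, cos_add_pi, cos_arctan_nine_sqrt_three_div_ten]
  have hcubic := two_mul_cos_pow_three_sub √7 φ
  rw [hcos3φ, hsqrt7] at hcubic
  have hθ_pos : 0 < θ := arctan_nine_sqrt_three_div_ten_pos
  have hθ_lt : θ < π / 2 := arctan_lt_pi_div_two _
  have hφ_gt : π / 3 < φ := by simp only [φ]; linarith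
  have hφ_lt : φ < π / 2 := by simp only [φ]; linarith
  have hcos_nonneg : 0 ≤ cos φ := cos_nonneg_of_mem_Icc ⟨by linarith [pi_pos], hφ_lt.le⟩
  have hcos_lt : cos φ < 1 / 2 := by
    rw [← cos_pi_div_three]
    exact cos_lt_cos_of_nonneg_of_le_pi (by positivity) (by linarith) hφ_gt
  have hsqrt7_lt : √7 < 4 := by nlinarith [sqrt_nonneg 7]
  apply eq_one_of_cubic_eq_zero
  · have hrhs : 2 * √7 ^ 3 * -(10 / (7 * √7)) = -20 := by
      field_simp
      linear_combination (-20 : ℝ) * hsqrt7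
    linear_combination hcubic + hrhs
  · nlinarith [sqrt_nonneg 7]
  · nlinarith [sqrt_nonneg 7]
end

section
/- cos((1/3)·arctan(3√3(π-1)π / (2 - 3π - 3π² + 2π³))) = (2π - 1)/(2√(π² - π + 1)). -/
/-!
Put `y = 2π - 1` and `u = √3 / y`. Then `cos (arctan u) = y / √(y² + 3)`, and `y² + 3 = 4(π² - π + 1)`.
The tangent triple-angle formula sends `u` to `(3u - u³) / (1 - 3u²) = 3√3 (y² - 1) / (y (y² - 9))`,
which is the argument of `arctan` in the statement, since `y² - 1 = 4π(π - 1)` and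
`y (y² - 9) = 4(2 - 3π - 3π² + 2π³)`. As `y > 3`, the angle `arctan u` lies in `(0, π/6)`, so
tripling it stays within the range of `arctan`.
-/

open Real

theorem Real.three_mul_arctan {x : ℝ} (h : 3 * x ^ 2 < 1) :
    3 * arctan x = arctan ((3 * x - x ^ 3) / (1 - 3 * x ^ 2)) := by
  have hx : 0 < 1 - x ^ 2 := by nlinarith
  rw [show 3 * arctan x = 2 * arctan x + arctan x by ring,
    two_mul_arctan (by nlinarith) (by nlinarith), arctan_add]
  · congr 1
    field_simp
    ring
  · rw [div_mul_eq_mul_div, div_lt_one hx]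
    linarith

theorem Real.cos_arctan_sqrt_three_div {y : ℝ} (hy : 0 < y) :
    cos (arctan (√3 / y)) = y / √(y ^ 2 + 3) := by
  have hsq : 1 + (√3 / y) ^ 2 = (√(y ^ 2 + 3) / y) ^ 2 := by
    rw [div_pow, div_pow, sq_sqrt (by norm_num), sq_sqrt (by positivity)]
    field_simp
  rw [cos_arctan, hsq, sqrt_sq (by positivity), one_div_div]

theorem Real.cos_one_third_mul_arctan {y : ℝ} (hy : 3 < y) :
    cos ((1 / 3) * arctan (3 * √3 * (y ^ 2 - 1) / (y * (y ^ 2 - 9)))) = y / √(y ^ 2 + 3) := by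
  have hy0 : y ≠ 0 := by positivity
  have hy9 : y ^ 2 - 9 ≠ 0 := by nlinarith
  have hcube : (√3) ^ 3 = 3 * √3 := by rw [pow_succ, sq_sqrt (by norm_num)]
  have hu : 3 * (√3 / y) ^ 2 < 1 := by
    rw [div_pow, sq_sqrt (by norm_num), ← mul_div_assoc, div_lt_one (by positivity)]
    nlinarith
  have htriple : 3 * √3 * (y ^ 2 - 1) / (y * (y ^ 2 - 9)) =
      (3 * (√3 / y) - (√3 / y) ^ 3) / (1 - 3 * (√3 / y) ^ 2) := by
    have hden : 1 - 3 * (√3 / y) ^ 2 = (y ^ 2 - 9) / y ^ 2 := by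
      rw [div_pow, sq_sqrt (by norm_num)]
      field_simp
      ring
    rw [hden, div_pow, hcube]
    field_simp
  rw [htriple, ← three_mul_arctan hu, ← mul_assoc, one_div_mul_cancel three_ne_zero, one_mul,
    cos_arctan_sqrt_three_div (by linarith)]

theorem pi_trig_identity :
    Real.cos ((1/3) * Real.arctan (3 * Real.sqrt 3 * (Real.pi - 1) * Real.pi /
        (2 - 3 * Real.pi - 3 * Real.pi ^ 2 + 2 * Real.pi ^ 3))) =
      (2 * Real.pi - 1) / (2 * Real.sqrt (Real.pi ^ 2 - Real.pi + 1)) := by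
  have harg : 3 * √3 * (π - 1) * π / (2 - 3 * π - 3 * π ^ 2 + 2 * π ^ 3) =
      3 * √3 * ((2 * π - 1) ^ 2 - 1) / ((2 * π - 1) * ((2 * π - 1) ^ 2 - 9)) := by
    rw [← mul_div_mul_left _ _ (four_ne_zero' ℝ)]
    congr 1 <;> ring
  have hnorm : 2 * √(π ^ 2 - π + 1) = √((2 * π - 1) ^ 2 + 3) := by
    rw [show (2 * π - 1) ^ 2 + 3 = 2 ^ 2 * (π ^ 2 - π + 1) by ring, sqrt_mul (by norm_num),
      sqrt_sq (by norm_num)]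
  rw [harg, hnorm]
  exact cos_one_third_mul_arctan (by linarith [pi_gt_three])
end
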